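/- arXiv:0910.1623 — 4 statements merged into one kernel-verified Lean document; each statement's English description precedes it below -/
import Mathlib

section
/- Let A be an n×m real matrix, T and Δ disjoint subsets of {1,...,m}, N_e = T ∪ Δ, and suppose A_{N_e} has full column rank. Let y ∈ ℝⁿ, γ > 0, and let c be the vector supported on N_e with c_{N_e} = (A_{N_e}' A_{N_e})^{-1} A_{N_e}' y. Let b̃ be the unique minimizer of L(b) = (1/2)‖y − Ab‖₂² + γ‖b_{T^c}‖₁ over vectors supported on N_e. Then there exists g ∈ ℝᵐ with g supported on Δ, g a subgradient of ‖b_{T^c}‖₁ at b̃ (so ‖g_Δ‖_∞ ≤ 1), such that c_{N_e} − b̃_{N_e} = γ (A_{N_e}' A_{N_e})^{-1} g_{N_e}. -/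
open Matrix Finset

noncomputable section

variable {n m : ℕ}

/-- Submatrix of columns of `A` indexed by `S`. -/
def cols (A : Matrix (Fin n) (Fin m) ℝ) (S : Finset (Fin m)) :
    Matrix (Fin n) {j // j ∈ S} ℝ := Matrix.of fun i j => A i j.1

/-- Subvector of `b` on indices in `S`. -/
def subv (b : Fin m → ℝ) (S : Finset (Fin m)) : {j // j ∈ S} → ℝ := fun j => b j.1

/-- `b` is supported on `S`. -/
def suppOn (b : Fin m → ℝ) (S : Finset (Fin m)) : Prop := ∀ j, j ∉ S → b j = 0

def l2v {k : Type*} [Fintype k] (v : k → ℝ) : ℝ := Real.sqrt (∑ i, v i ^ 2)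

def l1v {k : Type*} [Fintype k] (v : k → ℝ) : ℝ := ∑ i, |v i|

def linfv {k : Type*} [Fintype k] (v : k → ℝ) : ℝ := ⨆ i, |v i|

/-- ℓ¹ norm of the subvector of `b` on the complement of `T`. -/
def l1c (b : Fin m → ℝ) (T : Finset (Fin m)) : ℝ := ∑ j ∈ Tᶜ, |b j|

/-- Induced ℓ∞→ℓ∞ operator norm (max absolute row sum). -/
def matInf {k l : Type*} [Fintype k] [Fintype l] (B : Matrix k l ℝ) : ℝ :=
  ⨆ i, ∑ j, |B i j|

/-- Spectral norm (ℓ²→ℓ² operator norm). -/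
def spec {k l : Type*} [Fintype k] [Fintype l] (B : Matrix k l ℝ) : ℝ :=
  sSup ((fun x => l2v (B.mulVec x)) '' {x | l2v x ≤ 1})

/-- The modified-BPDN objective L(b) = (1/2)‖y − Ab‖₂² + γ‖b_{Tᶜ}‖₁. -/
def objL (A : Matrix (Fin n) (Fin m) ℝ) (y : Fin n → ℝ) (γ : ℝ) (T : Finset (Fin m))
    (b : Fin m → ℝ) : ℝ :=
  (1/2) * (∑ i, (y i - A.mulVec b i) ^ 2) + γ * l1c b T

/-- Orthogonal projector M = I − A_T (A_Tᵀ A_T)⁻¹ A_Tᵀ. -/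
def projM (A : Matrix (Fin n) (Fin m) ℝ) (T : Finset (Fin m)) : Matrix (Fin n) (Fin n) ℝ :=
  1 - cols A T * ((cols A T)ᵀ * cols A T)⁻¹ * (cols A T)ᵀ

/-- Least squares coefficients on `S` : (A_Sᵀ A_S)⁻¹ A_Sᵀ y. -/
def lsq (A : Matrix (Fin n) (Fin m) ℝ) (S : Finset (Fin m)) (y : Fin n → ℝ) :
    {j // j ∈ S} → ℝ :=
  ((cols A S)ᵀ * cols A S)⁻¹.mulVec ((cols A S)ᵀ.mulVec y)

/-- Least squares estimate on `S`, as a vector in ℝᵐ supported on `S`. -/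
def lsqFull (A : Matrix (Fin n) (Fin m) ℝ) (S : Finset (Fin m)) (y : Fin n → ℝ) :
    Fin m → ℝ := fun j => if h : j ∈ S then lsq A S y ⟨j, h⟩ else 0

/-- The matrix A_Δᵀ M A_Δ. -/
def schur (A : Matrix (Fin n) (Fin m) ℝ) (T Δ : Finset (Fin m)) :
    Matrix {j // j ∈ Δ} {j // j ∈ Δ} ℝ :=
  (cols A Δ)ᵀ * projM A T * cols A Δ

/-- The matrix (A_Tᵀ A_T)⁻¹ A_Tᵀ A_Δ (A_Δᵀ M A_Δ)⁻¹. -/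
def crossMat (A : Matrix (Fin n) (Fin m) ℝ) (T Δ : Finset (Fin m)) :
    Matrix {j // j ∈ T} {j // j ∈ Δ} ℝ :=
  ((cols A T)ᵀ * cols A T)⁻¹ * ((cols A T)ᵀ * cols A Δ) * (schur A T Δ)⁻¹

/-- The exact-recovery-coefficient quantity ‖(A_Δᵀ M A_Δ)⁻¹ A_Δᵀ M A_ω‖₁. -/
def erc (A : Matrix (Fin n) (Fin m) ℝ) (T Δ : Finset (Fin m)) (ω : Fin m) : ℝ :=
  l1v ((schur A T Δ)⁻¹.mulVec (((cols A Δ)ᵀ * projM A T).mulVec (fun i => A i ω)))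

/-- `δ` is a valid S-restricted isometry constant for `A`. -/
def RIP (A : Matrix (Fin n) (Fin m) ℝ) (S : ℕ) (δ : ℝ) : Prop :=
  0 ≤ δ ∧ ∀ (J : Finset (Fin m)), J.card ≤ S → ∀ x : Fin m → ℝ, suppOn x J →
    (1 - δ) * (∑ i, x i ^ 2) ≤ (∑ i, (A.mulVec x i) ^ 2) ∧
    (∑ i, (A.mulVec x i) ^ 2) ≤ (1 + δ) * (∑ i, x i ^ 2)

/-- `θ` is a valid (S,S')-restricted orthogonality constant for `A`. -/
def ROC (A : Matrix (Fin n) (Fin m) ℝ) (S S' : ℕ) (θ : ℝ) : Prop :=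
  0 ≤ θ ∧ ∀ (J J' : Finset (Fin m)), Disjoint J J' → J.card ≤ S → J'.card ≤ S' →
    ∀ x x' : Fin m → ℝ, suppOn x J → suppOn x' J' →
      |dotProduct (A.mulVec x) (A.mulVec x')| ≤ θ * l2v x * l2v x'

/-- `b` minimizes the modified-BPDN objective over vectors supported on `S`. -/
def IsRestrMin (A : Matrix (Fin n) (Fin m) ℝ) (y : Fin n → ℝ) (γ : ℝ)
    (T S : Finset (Fin m)) (b : Fin m → ℝ) : Prop :=
  suppOn b S ∧ ∀ b', suppOn b' S → objL A y γ T b ≤ objL A y γ T b'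

/-- `g` is a subgradient of `b ↦ ‖b_{Tᶜ}‖₁` at `b`. -/
def IsSubgrad (T : Finset (Fin m)) (b g : Fin m → ℝ) : Prop :=
  (∀ j, j ∈ T → g j = 0) ∧
  ∀ j, j ∉ T → |g j| ≤ 1 ∧ (b j ≠ 0 → g j = Real.sign (b j))

/-!
Write ρ = Aᵀ(y − A b̃). Moving the minimizer b̃ along a coordinate j ∈ N_e by t changes L by
−ρ_j t + O(t²) + γ (|b̃_j + t| − |b̃_j|), the last term being absent for j ∈ T. Nonnegativity of
this for all t forces ρ_j = 0 on T, |ρ_j| ≤ γ off T, and ρ_j = γ sign b̃_j where b̃_j ≠ 0, so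
g = ρ / γ on N_e (and 0 elsewhere) is a subgradient supported on Δ. The identity is then the
normal equations: A_{N_e}ᵀ A_{N_e} (c_{N_e} − b̃_{N_e}) = A_{N_e}ᵀ (y − A b̃) = ρ_{N_e}.
-/

open Filter Topology

theorem nonneg_of_forall_nonneg_mul_add_mul_sq {a k δ : ℝ} (hδ : 0 < δ)
    (h : ∀ t ∈ Set.Ioo 0 δ, 0 ≤ a * t + k * t ^ 2) : 0 ≤ a := by
  have hlim : Tendsto (fun t => a + k * t) (𝓝[>] 0) (𝓝 a) :=
    ((continuous_const.add (continuous_const.mul continuous_id)).tendsto' 0 a (by simp)).mono_left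
      nhdsWithin_le_nhds
  refine ge_of_tendsto hlim (eventually_of_mem (Ioo_mem_nhdsGT hδ) fun t ht => ?_)
  have := h t ht
  exact nonneg_of_mul_nonneg_right (by linarith : 0 ≤ t * (a + k * t)) ht.1

theorem abs_add_eq_abs_add_sign_mul {b t : ℝ} (hb : b ≠ 0) (ht : |t| ≤ |b|) :
    |b + t| = |b| + Real.sign b * t := by
  obtain ⟨htl, htr⟩ := abs_le.mp ht
  rcases hb.lt_or_gt with hb | hb
  · rw [abs_of_neg hb] at htl htr
    rw [Real.sign_of_neg hb, abs_of_neg hb, abs_of_nonpos (by linarith)]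
    ring
  · rw [abs_of_pos hb] at htl htr
    rw [Real.sign_of_pos hb, abs_of_pos hb, abs_of_nonneg (by linarith)]
    ring

theorem abs_le_of_forall_nonneg {c k γ b : ℝ}
    (h : ∀ t, 0 ≤ -c * t + k * t ^ 2 + γ * (|b + t| - |b|)) (hγ : 0 ≤ γ) : |c| ≤ γ := by
  have hup : ∀ t, γ * (|b + t| - |b|) ≤ γ * |t| := fun t =>
    mul_le_mul_of_nonneg_left (by linarith [abs_add_le b t]) hγ
  have hright : 0 ≤ γ - c :=
    nonneg_of_forall_nonneg_mul_add_mul_sq (k := k) one_pos fun t ht => by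
      have := hup t; rw [abs_of_pos ht.1] at this; linarith [h t]
  have hleft : 0 ≤ γ + c :=
    nonneg_of_forall_nonneg_mul_add_mul_sq (k := k) one_pos fun t ht => by
      have := hup (-t); rw [abs_neg, abs_of_pos ht.1] at this; linarith [h (-t)]
  exact abs_le.mpr ⟨by linarith, by linarith⟩

theorem eq_mul_sign_of_forall_nonneg {c k γ b : ℝ}
    (h : ∀ t, 0 ≤ -c * t + k * t ^ 2 + γ * (|b + t| - |b|)) (hb : b ≠ 0) :
    c = γ * Real.sign b := by
  have hsmall : ∀ t ∈ Set.Ioo 0 |b|,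
      |b + t| - |b| = Real.sign b * t ∧ |b + -t| - |b| = -(Real.sign b * t) := fun t ht => by
    have ht' : |t| ≤ |b| := by rw [abs_of_pos ht.1]; exact ht.2.le
    rw [abs_add_eq_abs_add_sign_mul hb ht', abs_add_eq_abs_add_sign_mul hb (by rwa [abs_neg])]
    constructor <;> ring
  have hright : 0 ≤ γ * Real.sign b - c :=
    nonneg_of_forall_nonneg_mul_add_mul_sq (k := k) (abs_pos.mpr hb) fun t ht => by
      have := h t; rw [(hsmall t ht).1] at this; linarith
  have hleft : 0 ≤ -(γ * Real.sign b - c) :=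
    nonneg_of_forall_nonneg_mul_add_mul_sq (k := k) (abs_pos.mpr hb) fun t ht => by
      have := h (-t); rw [(hsmall t ht).2] at this; linarith
  linarith

theorem l1c_add_single (b : Fin m → ℝ) (T : Finset (Fin m)) (j : Fin m) (t : ℝ) :
    l1c (b + Pi.single j t) T = l1c b T + if j ∈ T then 0 else |b j + t| - |b j| := by
  unfold l1c
  split_ifs with hjT
  · refine (Finset.sum_congr rfl fun k hk => ?_).trans (add_zero _).symm
    rw [Pi.add_apply, Pi.single_eq_of_ne (by rintro rfl; exact mem_compl.mp hk hjT), add_zero]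
  · have hj : j ∈ Tᶜ := mem_compl.mpr hjT
    rw [← Finset.add_sum_erase _ _ hj, ← Finset.add_sum_erase _ _ hj,
      Finset.sum_congr rfl fun k hk => by
        rw [Pi.add_apply, Pi.single_eq_of_ne (Finset.ne_of_mem_erase hk), add_zero]]
    simp only [Pi.add_apply, Pi.single_eq_same]
    ring

theorem objL_add_single (A : Matrix (Fin n) (Fin m) ℝ) (y : Fin n → ℝ) (γ : ℝ)
    (T : Finset (Fin m)) (b : Fin m → ℝ) (j : Fin m) (t : ℝ) :
    objL A y γ T (b + Pi.single j t) = objL A y γ T b - (Aᵀ *ᵥ (y - A *ᵥ b)) j * t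
      + (1 / 2 * ∑ i, A i j ^ 2) * t ^ 2 + (if j ∈ T then 0 else γ) * (|b j + t| - |b j|) := by
  have hAb : A *ᵥ (b + Pi.single j t) = fun i => (A *ᵥ b) i + A i j * t := by
    rw [mulVec_add, mulVec_single]; rfl
  have hcorr : (Aᵀ *ᵥ (y - A *ᵥ b)) j = ∑ i, A i j * (y i - (A *ᵥ b) i) := rfl
  have hsq : ∀ i, (y i - ((A *ᵥ b) i + A i j * t)) ^ 2
      = (y i - (A *ᵥ b) i) ^ 2 - 2 * (A i j * (y i - (A *ᵥ b) i)) * t + A i j ^ 2 * t ^ 2 :=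
    fun i => by ring
  simp only [objL, hAb, l1c_add_single, hcorr, hsq, Finset.sum_add_distrib,
    Finset.sum_sub_distrib, ← Finset.sum_mul, ← Finset.mul_sum]
  split_ifs <;> ring

namespace IsRestrMin

variable {A : Matrix (Fin n) (Fin m) ℝ} {y : Fin n → ℝ} {γ : ℝ} {T S : Finset (Fin m)}
  {b : Fin m → ℝ} {j : Fin m}

theorem forall_nonneg (hmin : IsRestrMin A y γ T S b) (hj : j ∈ S) (t : ℝ) :
    0 ≤ -(Aᵀ *ᵥ (y - A *ᵥ b)) j * t + (1 / 2 * ∑ i, A i j ^ 2) * t ^ 2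
      + (if j ∈ T then 0 else γ) * (|b j + t| - |b j|) := by
  have hsupp : suppOn (b + Pi.single j t) S := fun k hk => by
    rw [Pi.add_apply, hmin.1 k hk, Pi.single_eq_of_ne (by rintro rfl; exact hk hj), add_zero]
  have := hmin.2 _ hsupp
  rw [objL_add_single] at this
  linarith

theorem residual_corr_eq_zero (hmin : IsRestrMin A y γ T S b) (hj : j ∈ S) (hjT : j ∈ T) :
    (Aᵀ *ᵥ (y - A *ᵥ b)) j = 0 :=
  abs_nonpos_iff.mp <| abs_le_of_forall_nonneg (γ := 0) (b := b j)
    (fun t => by simpa only [if_pos hjT] using hmin.forall_nonneg hj t) le_rfl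

theorem abs_residual_corr_le (hγ : 0 ≤ γ) (hmin : IsRestrMin A y γ T S b) (hj : j ∈ S)
    (hjT : j ∉ T) : |(Aᵀ *ᵥ (y - A *ᵥ b)) j| ≤ γ :=
  abs_le_of_forall_nonneg (fun t => by simpa only [if_neg hjT] using hmin.forall_nonneg hj t) hγ

theorem residual_corr_eq_mul_sign (hmin : IsRestrMin A y γ T S b) (hj : j ∈ S) (hjT : j ∉ T)
    (hb : b j ≠ 0) : (Aᵀ *ᵥ (y - A *ᵥ b)) j = γ * Real.sign (b j) :=
  eq_mul_sign_of_forall_nonneg (fun t => by simpa only [if_neg hjT] using hmin.forall_nonneg hj t)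
    hb

end IsRestrMin

def restrSubgrad (A : Matrix (Fin n) (Fin m) ℝ) (y : Fin n → ℝ) (γ : ℝ) (S : Finset (Fin m))
    (b : Fin m → ℝ) : Fin m → ℝ :=
  fun j => if j ∈ S then γ⁻¹ * (Aᵀ *ᵥ (y - A *ᵥ b)) j else 0

section restrSubgrad

variable {A : Matrix (Fin n) (Fin m) ℝ} {y : Fin n → ℝ} {γ : ℝ} {T Δ S : Finset (Fin m)}
  {b : Fin m → ℝ}

theorem suppOn_restrSubgrad (hmin : IsRestrMin A y γ T (T ∪ Δ) b) :
    suppOn (restrSubgrad A y γ (T ∪ Δ) b) Δ := fun j hjΔ => by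
  unfold restrSubgrad
  split_ifs with hj
  · have hjT : j ∈ T := (mem_union.mp hj).resolve_right hjΔ
    rw [hmin.residual_corr_eq_zero hj hjT, mul_zero]
  · rfl

theorem isSubgrad_restrSubgrad (hγ : 0 < γ) (hmin : IsRestrMin A y γ T S b) :
    IsSubgrad T b (restrSubgrad A y γ S b) := by
  refine ⟨fun j hjT => ?_, fun j hjT => ⟨?_, fun hb => ?_⟩⟩ <;> unfold restrSubgrad
  · split_ifs with hj
    · rw [hmin.residual_corr_eq_zero hj hjT, mul_zero]
    · rfl
  · split_ifs with hj
    · rw [abs_mul, abs_inv, abs_of_pos hγ, inv_mul_le_one₀ hγ]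
      exact hmin.abs_residual_corr_le hγ.le hj hjT
    · simp
  · have hj : j ∈ S := by_contra fun hj => hb (hmin.1 j hj)
    rw [if_pos hj, hmin.residual_corr_eq_mul_sign hj hjT hb, inv_mul_cancel_left₀ hγ.ne']

theorem smul_subv_restrSubgrad (hγ : γ ≠ 0) :
    γ • subv (restrSubgrad A y γ S b) S = subv (Aᵀ *ᵥ (y - A *ᵥ b)) S := by
  funext j
  simp only [Pi.smul_apply, smul_eq_mul, subv, restrSubgrad, if_pos j.2, mul_inv_cancel_left₀ hγ]

end restrSubgrad

theorem mulVec_eq_cols_mulVec_subv (A : Matrix (Fin n) (Fin m) ℝ) {b : Fin m → ℝ}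
    {S : Finset (Fin m)} (hb : suppOn b S) : A *ᵥ b = cols A S *ᵥ subv b S := by
  funext i
  simp only [mulVec, dotProduct, cols, subv, of_apply]
  rw [Finset.sum_coe_sort S (fun j => A i j * b j)]
  exact (Finset.sum_subset (Finset.subset_univ S) fun j _ hj => by rw [hb j hj, mul_zero]).symm

theorem lsq_sub_subv {A : Matrix (Fin n) (Fin m) ℝ} {S : Finset (Fin m)} {b : Fin m → ℝ}
    (hrank : IsUnit ((cols A S)ᵀ * cols A S)) (hb : suppOn b S) (y : Fin n → ℝ) :
    lsq A S y - subv b S = ((cols A S)ᵀ * cols A S)⁻¹ *ᵥ subv (Aᵀ *ᵥ (y - A *ᵥ b)) S := by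
  have hdet := (isUnit_iff_isUnit_det _).mp hrank
  have hb' : subv b S = ((cols A S)ᵀ * cols A S)⁻¹ *ᵥ ((cols A S)ᵀ *ᵥ (A *ᵥ b)) := by
    rw [mulVec_eq_cols_mulVec_subv A hb, mulVec_mulVec, mulVec_mulVec, Matrix.mul_assoc,
      nonsing_inv_mul _ hdet, one_mulVec]
  rw [lsq, hb', ← mulVec_sub, ← mulVec_sub]
  rfl

theorem stmt2_general (n m : ℕ) (A : Matrix (Fin n) (Fin m) ℝ) (T Δ : Finset (Fin m))
    (hrank : IsUnit ((cols A (T ∪ Δ))ᵀ * cols A (T ∪ Δ)))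
    (γ : ℝ) (hγ : 0 < γ) (y : Fin n → ℝ) (btil : Fin m → ℝ)
    (hmin : IsRestrMin A y γ T (T ∪ Δ) btil) :
    ∃ g : Fin m → ℝ, suppOn g Δ ∧ IsSubgrad T btil g ∧
      lsq A (T ∪ Δ) y - subv btil (T ∪ Δ) =
        γ • (((cols A (T ∪ Δ))ᵀ * cols A (T ∪ Δ))⁻¹.mulVec (subv g (T ∪ Δ))) := by
  refine ⟨restrSubgrad A y γ (T ∪ Δ) btil, suppOn_restrSubgrad hmin,
    isSubgrad_restrSubgrad hγ hmin, ?_⟩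
  rw [← mulVec_smul, smul_subv_restrSubgrad hγ.ne', lsq_sub_subv hrank hmin.1]

/-- characterization of the restricted minimizer via a subgradient. -/
theorem stmt2 (n m : ℕ) (A : Matrix (Fin n) (Fin m) ℝ) (T Δ : Finset (Fin m))
    (hdisj : Disjoint T Δ)
    (hrank : IsUnit ((cols A (T ∪ Δ))ᵀ * cols A (T ∪ Δ)))
    (γ : ℝ) (hγ : 0 < γ) (y : Fin n → ℝ) (btil : Fin m → ℝ)
    (hmin : IsRestrMin A y γ T (T ∪ Δ) btil) :
    ∃ g : Fin m → ℝ, suppOn g Δ ∧ IsSubgrad T btil g ∧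
      lsq A (T ∪ Δ) y - subv btil (T ∪ Δ) =
        γ • (((cols A (T ∪ Δ))ᵀ * cols A (T ∪ Δ))⁻¹.mulVec (subv g (T ∪ Δ))) :=
  stmt2_general n m A T Δ hrank γ hγ y btil hmin
end
end

section
/- Let T, Δ be disjoint index sets with N_e = T ∪ Δ, A an n×m matrix with A_{N_e} of full column rank, M = I − A_T(A_T'A_T)^{-1}A_T', y ∈ ℝⁿ, γ > 0, c the least-squares solution supported on N_e (c_{N_e} = (A_{N_e}'A_{N_e})^{-1}A_{N_e}'y), and b̃ the minimizer of L(b) = (1/2)‖y − Ab‖₂² + γ‖b_{T^c}‖₁ over vectors supported on N_e. Then ‖b̃ − c‖_∞ ≤ γ · max( ‖(A_T'A_T)^{-1}A_T'A_Δ(A_Δ'MA_Δ)^{-1}‖_∞ , ‖(A_Δ'MA_Δ)^{-1}‖_∞ ). -/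
/-!
Perturbing `b̃` along a single coordinate `j ∈ T ∪ Δ` shows that the correlation
`r = Aᵀ (y - A b̃)` vanishes on `T` and is bounded by `γ` on `Δ`. Since `c` solves the normal
equations on `T ∪ Δ`, the error `u = b̃ - c` satisfies `A_Tᵀ A u = 0` and `A_Δᵀ A u = -r_Δ`.
Eliminating `u_T` from this block system gives `u_Δ = -(A_Δᵀ M A_Δ)⁻¹ r_Δ` and
`u_T = (A_Tᵀ A_T)⁻¹ A_Tᵀ A_Δ (A_Δᵀ M A_Δ)⁻¹ r_Δ`, and the row-sum bound
`‖B v‖_∞ ≤ ‖B‖_∞ ‖v‖_∞` finishes the proof.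
-/

open Matrix Finset

noncomputable section

variable {n m : ℕ}

theorem le_of_forall_pos_mul_le_add_sq {r γ : ℝ} (q : ℝ)
    (h : ∀ t > 0, t * r ≤ t * γ + t ^ 2 * q) : r ≤ γ := by
  refine le_of_forall_pos_lt_add fun ε hε => ?_
  set t := ε / (|q| + 1) with ht
  have ht0 : 0 < t := by positivity
  have htq : t * q < ε := by
    calc t * q ≤ t * |q| := mul_le_mul_of_nonneg_left (le_abs_self q) ht0.le
      _ < t * (|q| + 1) := by gcongr; linarith
      _ = ε := by rw [ht]; field_simp
  have := h t ht0
  nlinarith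

section Gram

variable {ι κ μ : Type*} [Fintype ι] [Fintype κ] [Fintype μ]

theorem isUnit_of_mulVec_eq_zero [DecidableEq κ] {G : Matrix κ κ ℝ}
    (h : ∀ x, G *ᵥ x = 0 → x = 0) : IsUnit G :=
  mulVec_injective_iff_isUnit.mp fun a b hab =>
    sub_eq_zero.mp (h _ (by rw [mulVec_sub, hab, sub_self]))

theorem eq_nonsing_inv_mulVec_of_mulVec_eq [DecidableEq κ] {G : Matrix κ κ ℝ} (hG : IsUnit G)
    {x v : κ → ℝ} (h : G *ᵥ x = v) : x = G⁻¹ *ᵥ v := by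
  rw [← h, mulVec_mulVec, nonsing_inv_mul _ ((isUnit_iff_isUnit_det G).mp hG), one_mulVec]

theorem transpose_mul_self_mulVec_eq_zero_iff (B : Matrix ι κ ℝ) (x : κ → ℝ) :
    (Bᵀ * B) *ᵥ x = 0 ↔ B *ᵥ x = 0 := by
  simpa only [LinearMap.mem_ker, mulVecLin_apply] using
    SetLike.ext_iff.mp (ker_mulVecLin_transpose_mul_self B) x

theorem eq_zero_of_isUnit_transpose_mul_self [DecidableEq κ] {B : Matrix ι κ ℝ}
    (hB : IsUnit (Bᵀ * B)) {x : κ → ℝ} (hx : B *ᵥ x = 0) : x = 0 := by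
  simpa using eq_nonsing_inv_mulVec_of_mulVec_eq hB
    ((transpose_mul_self_mulVec_eq_zero_iff B x).mpr hx)

/-- The Schur complement of `PᵀP` in the Gram matrix of `[P Q]`. -/
def schurCompl [DecidableEq ι] [DecidableEq κ] (P : Matrix ι κ ℝ) (Q : Matrix ι μ ℝ) :
    Matrix μ μ ℝ :=
  Qᵀ * (1 - P * (Pᵀ * P)⁻¹ * Pᵀ) * Q

variable [DecidableEq ι] [DecidableEq κ] (P : Matrix ι κ ℝ) (Q : Matrix ι μ ℝ)

theorem schurCompl_mulVec (z : μ → ℝ) :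
    schurCompl P Q *ᵥ z = Qᵀ *ᵥ (P *ᵥ (-((Pᵀ * P)⁻¹ * (Pᵀ * Q)) *ᵥ z) + Q *ᵥ z) := by
  simp only [schurCompl, ← mulVec_mulVec, sub_mulVec, one_mulVec, neg_mulVec, mulVec_neg]
  rw [← sub_eq_neg_add]

omit [DecidableEq ι] in
theorem transpose_mulVec_elim_eq_zero (hP : IsUnit (Pᵀ * P)) (z : μ → ℝ) :
    Pᵀ *ᵥ (P *ᵥ (-((Pᵀ * P)⁻¹ * (Pᵀ * Q)) *ᵥ z) + Q *ᵥ z) = 0 := by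
  have hG : (Pᵀ * P) *ᵥ (-((Pᵀ * P)⁻¹ * (Pᵀ * Q)) *ᵥ z) = -((Pᵀ * Q) *ᵥ z) := by
    rw [mulVec_mulVec, Matrix.mul_neg, ← Matrix.mul_assoc,
      mul_nonsing_inv _ ((isUnit_iff_isUnit_det _).mp hP), Matrix.one_mul, neg_mulVec]
  rw [mulVec_add, mulVec_mulVec _ Pᵀ P, hG, mulVec_mulVec, neg_add_cancel]

variable {P Q}

omit [DecidableEq ι] in
theorem isUnit_transpose_mul_self_left (hinj : ∀ x z, P *ᵥ x + Q *ᵥ z = 0 → x = 0 ∧ z = 0) :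
    IsUnit (Pᵀ * P) :=
  isUnit_of_mulVec_eq_zero fun x hx =>
    (hinj x 0 (by rw [(transpose_mul_self_mulVec_eq_zero_iff P x).mp hx, mulVec_zero,
      add_zero])).1

theorem isUnit_schurCompl [DecidableEq μ]
    (hinj : ∀ x z, P *ᵥ x + Q *ᵥ z = 0 → x = 0 ∧ z = 0) : IsUnit (schurCompl P Q) := by
  refine isUnit_of_mulVec_eq_zero fun z hz => ?_
  set x := -((Pᵀ * P)⁻¹ * (Pᵀ * Q)) *ᵥ z
  have hPw : Pᵀ *ᵥ (P *ᵥ x + Q *ᵥ z) = 0 :=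
    transpose_mulVec_elim_eq_zero P Q (isUnit_transpose_mul_self_left hinj) z
  have hQw : Qᵀ *ᵥ (P *ᵥ x + Q *ᵥ z) = 0 := by rw [← schurCompl_mulVec, hz]
  -- `w ⬝ w = x ⬝ Pᵀ w + z ⬝ Qᵀ w` for `w = P x + Q z`
  have hw : P *ᵥ x + Q *ᵥ z = 0 := by
    refine dotProduct_self_eq_zero.mp ?_
    rw [dotProduct_add, ← dotProduct_transpose_mulVec P, ← dotProduct_transpose_mulVec Q, hPw,
      hQw, dotProduct_zero, dotProduct_zero, add_zero]
  exact (hinj x z hw).2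

theorem eq_of_transpose_mulVec_eq [DecidableEq μ] (hP : IsUnit (Pᵀ * P))
    (hS : IsUnit (schurCompl P Q)) {x : κ → ℝ} {z s : μ → ℝ}
    (hx : Pᵀ *ᵥ (P *ᵥ x + Q *ᵥ z) = 0) (hz : Qᵀ *ᵥ (P *ᵥ x + Q *ᵥ z) = -s) :
    x = ((Pᵀ * P)⁻¹ * (Pᵀ * Q) * (schurCompl P Q)⁻¹) *ᵥ s ∧
      z = -((schurCompl P Q)⁻¹ *ᵥ s) := by
  have hx' : x = -((Pᵀ * P)⁻¹ * (Pᵀ * Q)) *ᵥ z := by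
    rw [mulVec_add, mulVec_mulVec, mulVec_mulVec] at hx
    rw [eq_nonsing_inv_mulVec_of_mulVec_eq hP (eq_neg_of_add_eq_zero_left hx), mulVec_neg,
      neg_mulVec, mulVec_mulVec]
  have hz' : z = -((schurCompl P Q)⁻¹ *ᵥ s) := by
    rw [← mulVec_neg]
    exact eq_nonsing_inv_mulVec_of_mulVec_eq hS (by rw [schurCompl_mulVec, ← hx', hz])
  refine ⟨?_, hz'⟩
  rw [hx', hz', mulVec_neg, neg_mulVec, neg_neg, mulVec_mulVec]

end Gram

section RowSumNorm

variable {k l : Type*} [Fintype k] [Fintype l]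

theorem matInf_nonneg (B : Matrix k l ℝ) : 0 ≤ matInf B :=
  Real.iSup_nonneg fun _ => sum_nonneg fun _ _ => abs_nonneg _

theorem abs_mulVec_apply_le (B : Matrix k l ℝ) {v : l → ℝ} {c : ℝ} (hc : 0 ≤ c)
    (hv : ∀ j, |v j| ≤ c) (i : k) : |(B *ᵥ v) i| ≤ c * matInf B :=
  calc |(B *ᵥ v) i| ≤ ∑ j, |B i j * v j| := abs_sum_le_sum_abs _ _
    _ ≤ ∑ j, |B i j| * c := sum_le_sum fun j _ => by
        rw [abs_mul]; exact mul_le_mul_of_nonneg_left (hv j) (abs_nonneg _)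
    _ = c * ∑ j, |B i j| := by rw [← sum_mul, mul_comm]
    _ ≤ c * matInf B := mul_le_mul_of_nonneg_left
        (le_ciSup (f := fun i => ∑ j, |B i j|) (Set.finite_range _).bddAbove i) hc

end RowSumNorm

theorem linfv_le_of_subv_eq {T Δ : Finset (Fin m)} {u : Fin m → ℝ}
    (hu : suppOn u (T ∪ Δ)) {C : Matrix {j // j ∈ T} {j // j ∈ Δ} ℝ}
    {D : Matrix {j // j ∈ Δ} {j // j ∈ Δ} ℝ} {s : {j // j ∈ Δ} → ℝ} {c : ℝ} (hc : 0 ≤ c)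
    (hs : ∀ j, |s j| ≤ c) (huT : subv u T = C *ᵥ s) (huΔ : subv u Δ = -(D *ᵥ s)) :
    linfv u ≤ c * max (matInf C) (matInf D) := by
  have hbound : 0 ≤ c * max (matInf C) (matInf D) :=
    mul_nonneg hc (le_max_of_le_left (matInf_nonneg C))
  refine Real.iSup_le (fun j => ?_) hbound
  by_cases hjT : j ∈ T
  · calc |u j| = |(C *ᵥ s) ⟨j, hjT⟩| := congrArg abs (congrFun huT ⟨j, hjT⟩)
      _ ≤ c * max (matInf C) (matInf D) := by
        grw [abs_mulVec_apply_le C hc hs, ← le_max_left]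
  by_cases hjΔ : j ∈ Δ
  · calc |u j| = |(-(D *ᵥ s)) ⟨j, hjΔ⟩| := congrArg abs (congrFun huΔ ⟨j, hjΔ⟩)
      _ = |(D *ᵥ s) ⟨j, hjΔ⟩| := by rw [Pi.neg_apply, abs_neg]
      _ ≤ c * max (matInf C) (matInf D) := by
        grw [abs_mulVec_apply_le D hc hs, ← le_max_right]
  rwa [hu j (by simp [hjT, hjΔ]), abs_zero]

section Columns

def extendByZero (S : Finset (Fin m)) (x : {j // j ∈ S} → ℝ) : Fin m → ℝ :=
  fun j => if h : j ∈ S then x ⟨j, h⟩ else 0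

theorem suppOn_extendByZero (S : Finset (Fin m)) (x : {j // j ∈ S} → ℝ) :
    suppOn (extendByZero S x) S :=
  fun _ hj => dif_neg hj

theorem subv_extendByZero (S : Finset (Fin m)) (x : {j // j ∈ S} → ℝ) :
    subv (extendByZero S x) S = x :=
  funext fun j => dif_pos j.2

theorem subv_extendByZero_of_disjoint {S S' : Finset (Fin m)} (h : Disjoint S S')
    (x : {j // j ∈ S} → ℝ) : subv (extendByZero S x) S' = 0 :=
  funext fun j => dif_neg (disjoint_right.mp h j.2)

theorem extendByZero_subv {S : Finset (Fin m)} {b : Fin m → ℝ} (hb : suppOn b S) :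
    extendByZero S (subv b S) = b := by
  funext j
  by_cases hj : j ∈ S
  · exact dif_pos hj
  · exact (dif_neg hj).trans (hb j hj).symm

theorem mulVec_extendByZero (A : Matrix (Fin n) (Fin m) ℝ) (S : Finset (Fin m))
    (x : {j // j ∈ S} → ℝ) : A *ᵥ extendByZero S x = cols A S *ᵥ x := by
  funext i
  simp only [mulVec, dotProduct, extendByZero, cols, mul_dite, mul_zero, of_apply]
  rw [← sum_subset (subset_univ S) fun j _ hj => dif_neg hj, sum_dite_of_true fun _ h => h]

variable (A : Matrix (Fin n) (Fin m) ℝ)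

theorem mulVec_eq_cols_mulVec_add {T Δ : Finset (Fin m)} (hdisj : Disjoint T Δ)
    {b : Fin m → ℝ} (hb : suppOn b (T ∪ Δ)) :
    A *ᵥ b = cols A T *ᵥ subv b T + cols A Δ *ᵥ subv b Δ := by
  have hsplit : b = extendByZero T (subv b T) + extendByZero Δ (subv b Δ) := by
    funext j
    by_cases hjT : j ∈ T
    · simp [extendByZero, subv, hjT, disjoint_left.mp hdisj hjT]
    · by_cases hjΔ : j ∈ Δ
      · simp [extendByZero, subv, hjT, hjΔ]
      · simp [extendByZero, hjT, hjΔ, hb j (by simp [hjT, hjΔ])]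
  conv_lhs => rw [hsplit]
  rw [mulVec_add, mulVec_extendByZero, mulVec_extendByZero]

theorem cols_mulVec_add_eq_zero {T Δ : Finset (Fin m)} (hdisj : Disjoint T Δ)
    (hrank : IsUnit ((cols A (T ∪ Δ))ᵀ * cols A (T ∪ Δ)))
    (x : {j // j ∈ T} → ℝ) (z : {j // j ∈ Δ} → ℝ)
    (h : cols A T *ᵥ x + cols A Δ *ᵥ z = 0) : x = 0 ∧ z = 0 := by
  set b := extendByZero T x + extendByZero Δ z
  have hb : suppOn b (T ∪ Δ) := fun j hj => by
    rw [mem_union, not_or] at hj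
    simp [b, suppOn_extendByZero T x j hj.1, suppOn_extendByZero Δ z j hj.2]
  have hAb : cols A (T ∪ Δ) *ᵥ subv b (T ∪ Δ) = 0 := by
    rwa [← mulVec_extendByZero, extendByZero_subv hb, mulVec_add, mulVec_extendByZero,
      mulVec_extendByZero]
  have hb0 : b = 0 := by
    rw [← extendByZero_subv hb, eq_zero_of_isUnit_transpose_mul_self hrank hAb]
    funext j
    simp [extendByZero]
  constructor
  · calc x = subv (extendByZero T x) T + subv (extendByZero Δ z) T := by
          rw [subv_extendByZero, subv_extendByZero_of_disjoint hdisj.symm, add_zero]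
      _ = subv b T := rfl
      _ = 0 := by rw [hb0]; rfl
  · calc z = subv (extendByZero T x) Δ + subv (extendByZero Δ z) Δ := by
          rw [subv_extendByZero, subv_extendByZero_of_disjoint hdisj, zero_add]
      _ = subv b Δ := rfl
      _ = 0 := by rw [hb0]; rfl

theorem lsqFull_eq_extendByZero (S : Finset (Fin m)) (y : Fin n → ℝ) :
    lsqFull A S y = extendByZero S (lsq A S y) :=
  rfl

theorem transpose_mulVec_mulVec_sub_lsqFull {S : Finset (Fin m)}
    (hS : IsUnit ((cols A S)ᵀ * cols A S)) (y : Fin n → ℝ) (b : Fin m → ℝ) {j : Fin m}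
    (hj : j ∈ S) :
    (Aᵀ *ᵥ (A *ᵥ (b - lsqFull A S y))) j = -(Aᵀ *ᵥ (y - A *ᵥ b)) j := by
  have hnormal : (cols A S)ᵀ *ᵥ (y - cols A S *ᵥ lsq A S y) = 0 := by
    rw [mulVec_sub, lsq, mulVec_mulVec, mulVec_mulVec,
      mul_nonsing_inv _ ((isUnit_iff_isUnit_det _).mp hS), one_mulVec, sub_self]
  have hlsq : A *ᵥ lsqFull A S y = cols A S *ᵥ lsq A S y := by
    rw [lsqFull_eq_extendByZero, mulVec_extendByZero]
  have hres : (Aᵀ *ᵥ (y - A *ᵥ lsqFull A S y)) j = 0 := by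
    rw [hlsq]
    exact congrFun hnormal ⟨j, hj⟩
  rw [show A *ᵥ (b - lsqFull A S y) = (y - A *ᵥ lsqFull A S y) - (y - A *ᵥ b) by
    rw [mulVec_sub]; abel, mulVec_sub, Pi.sub_apply, hres, zero_sub]

end Columns

section FirstOrderConditions

theorem l1c_add_single_of_mem {T : Finset (Fin m)} {j : Fin m} (hj : j ∈ T)
    (b : Fin m → ℝ) (t : ℝ) : l1c (b + Pi.single j t) T = l1c b T :=
  sum_congr rfl fun k hk => by
    rw [Pi.add_apply, Pi.single_eq_of_ne (ne_of_mem_of_not_mem hj (mem_compl.mp hk)).symm,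
      add_zero]

theorem l1c_add_single_le (T : Finset (Fin m)) (b : Fin m → ℝ) (j : Fin m) (t : ℝ) :
    l1c (b + Pi.single j t) T ≤ l1c b T + |t| :=
  calc l1c (b + Pi.single j t) T ≤ ∑ k ∈ Tᶜ, (|b k| + |(Pi.single j t : Fin m → ℝ) k|) :=
        sum_le_sum fun k _ => abs_add_le _ _
    _ ≤ l1c b T + ∑ k, |(Pi.single j t : Fin m → ℝ) k| := by
        rw [sum_add_distrib, l1c]
        exact add_le_add le_rfl (sum_le_sum_of_subset_of_nonneg (subset_univ _)
          fun _ _ _ => abs_nonneg _)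
    _ = l1c b T + |t| := by
        simp [Pi.single_apply, apply_ite]

theorem sum_sq_sub_mulVec_add_single (A : Matrix (Fin n) (Fin m) ℝ) (y : Fin n → ℝ)
    (b : Fin m → ℝ) (j : Fin m) (t : ℝ) :
    ∑ i, (y i - (A *ᵥ (b + Pi.single j t)) i) ^ 2 =
      ∑ i, (y i - (A *ᵥ b) i) ^ 2 - 2 * t * (Aᵀ *ᵥ (y - A *ᵥ b)) j +
        t ^ 2 * ∑ i, A i j ^ 2 := by
  have hcol : ∀ i, (A *ᵥ (b + Pi.single j t)) i = (A *ᵥ b) i + A i j * t := fun i => by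
    simp [mulVec_add, mul_comm]
  have hres : (Aᵀ *ᵥ (y - A *ᵥ b)) j = ∑ i, A i j * (y i - (A *ᵥ b) i) := rfl
  rw [hres, mul_sum, mul_sum, ← sum_sub_distrib, ← sum_add_distrib]
  exact sum_congr rfl fun i _ => by rw [hcol]; ring

variable {A : Matrix (Fin n) (Fin m) ℝ} {y : Fin n → ℝ} {γ : ℝ} {T S : Finset (Fin m)}
  {b : Fin m → ℝ}

theorem IsRestrMin.mul_residual_le (h : IsRestrMin A y γ T S b) {j : Fin m} (hj : j ∈ S)
    (t : ℝ) :
    t * (Aᵀ *ᵥ (y - A *ᵥ b)) j ≤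
      t ^ 2 * ((∑ i, A i j ^ 2) / 2) + γ * (l1c (b + Pi.single j t) T - l1c b T) := by
  have hsupp : suppOn (b + Pi.single j t) S := fun k hk => by
    rw [Pi.add_apply, h.1 k hk, Pi.single_eq_of_ne (ne_of_mem_of_not_mem hj hk).symm, add_zero]
  have hle := h.2 _ hsupp
  rw [objL, objL, sum_sq_sub_mulVec_add_single] at hle
  linarith

theorem IsRestrMin.residual_eq_zero (h : IsRestrMin A y γ T S b) {j : Fin m} (hjS : j ∈ S)
    (hjT : j ∈ T) : (Aᵀ *ᵥ (y - A *ᵥ b)) j = 0 := by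
  set r := (Aᵀ *ᵥ (y - A *ᵥ b)) j
  set q := (∑ i, A i j ^ 2) / 2
  have key : ∀ t, t * r ≤ t ^ 2 * q := fun t => by
    simpa [l1c_add_single_of_mem hjT] using h.mul_residual_le hjS t
  refine le_antisymm (le_of_forall_pos_mul_le_add_sq q fun t _ => ?_)
    (neg_nonpos.mp (le_of_forall_pos_mul_le_add_sq q fun t _ => ?_))
  · simpa using key t
  · have := key (-t)
    rw [neg_sq] at this
    linarith

theorem IsRestrMin.abs_residual_le (h : IsRestrMin A y γ T S b) (hγ : 0 ≤ γ) {j : Fin m}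
    (hjS : j ∈ S) : |(Aᵀ *ᵥ (y - A *ᵥ b)) j| ≤ γ := by
  set r := (Aᵀ *ᵥ (y - A *ᵥ b)) j
  set q := (∑ i, A i j ^ 2) / 2
  have key : ∀ t, t * r ≤ t ^ 2 * q + γ * |t| := fun t => by
    have hmin : t * r ≤ t ^ 2 * q + γ * (l1c (b + Pi.single j t) T - l1c b T) :=
      h.mul_residual_le hjS t
    have := mul_le_mul_of_nonneg_left (l1c_add_single_le T b j t) hγ
    linarith
  refine abs_le.mpr ⟨neg_le.mp (le_of_forall_pos_mul_le_add_sq q fun t ht => ?_),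
    le_of_forall_pos_mul_le_add_sq q fun t ht => ?_⟩
  · have := key (-t)
    rw [neg_sq, abs_neg, abs_of_pos ht] at this
    linarith
  · have := key t
    rw [abs_of_pos ht] at this
    linarith

end FirstOrderConditions

/-- ℓ∞ bound on the error between the restricted minimizer and the
least-squares estimate. -/
theorem stmt4 (n m : ℕ) (A : Matrix (Fin n) (Fin m) ℝ) (T Δ : Finset (Fin m))
    (hdisj : Disjoint T Δ)
    (hrank : IsUnit ((cols A (T ∪ Δ))ᵀ * cols A (T ∪ Δ)))
    (γ : ℝ) (hγ : 0 < γ) (y : Fin n → ℝ) (btil : Fin m → ℝ)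
    (hmin : IsRestrMin A y γ T (T ∪ Δ) btil) :
    linfv (btil - lsqFull A (T ∪ Δ) y) ≤
      γ * max (matInf (crossMat A T Δ)) (matInf ((schur A T Δ)⁻¹)) := by
  set r := Aᵀ *ᵥ (y - A *ᵥ btil)
  have hrT : ∀ j ∈ T, r j = 0 := fun j hj => hmin.residual_eq_zero (mem_union_left _ hj) hj
  have hrΔ : ∀ j, |subv r Δ j| ≤ γ := fun j =>
    hmin.abs_residual_le hγ.le (mem_union_right _ j.2)
  set u := btil - lsqFull A (T ∪ Δ) y
  have hu : suppOn u (T ∪ Δ) := fun j hj => by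
    rw [show u j = btil j - lsqFull A (T ∪ Δ) y j from rfl, hmin.1 j hj,
      lsqFull_eq_extendByZero, suppOn_extendByZero _ _ j hj, sub_zero]
  have hAu : ∀ j ∈ T ∪ Δ, (Aᵀ *ᵥ (A *ᵥ u)) j = -r j :=
    fun j hj => transpose_mulVec_mulVec_sub_lsqFull A hrank y btil hj
  have hPu : (cols A T)ᵀ *ᵥ (A *ᵥ u) = 0 := funext fun j =>
    (hAu j (mem_union_left _ j.2)).trans (by rw [hrT j j.2, neg_zero]; rfl)
  have hQu : (cols A Δ)ᵀ *ᵥ (A *ᵥ u) = -subv r Δ := funext fun j =>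
    hAu j (mem_union_right _ j.2)
  rw [mulVec_eq_cols_mulVec_add A hdisj hu] at hPu hQu
  have hinj := cols_mulVec_add_eq_zero A hdisj hrank
  obtain ⟨huT, huΔ⟩ := eq_of_transpose_mulVec_eq (isUnit_transpose_mul_self_left hinj)
    (isUnit_schurCompl hinj) hPu hQu
  exact linfv_le_of_subv_eq hu hγ.le hrΔ huT huΔ
end
end

section
/- Let A be an n×m matrix with restricted isometry constants δ_S and restricted orthogonality constants θ_{S,S'}. Let T, Δ be disjoint index sets with 1 − δ_{|Δ|} − θ_{|Δ|,|T|}²/(1 − δ_{|T|}) > 0. Then, with M = I − A_T(A_T'A_T)^{-1}A_T', the matrix A_Δ' M A_Δ is invertible and ‖(A_Δ' M A_Δ)^{-1}‖₂ ≤ 1 / (1 − δ_{|Δ|} − θ_{|Δ|,|T|}²/(1 − δ_{|T|})). -/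
open Matrix Finset

noncomputable section

variable {n m : ℕ}

/-!
Write `G = A_Tᵀ A_T` and `v = A_Tᵀ A_Δ x`, so that `xᵀ (A_Δᵀ M A_Δ) x = ‖A_Δ x‖² − vᵀ G⁻¹ v`.
The RIP bounds the first term below by `(1 − δ_{|Δ|}) ‖x‖²`; the ROC gives `‖v‖ ≤ θ ‖x‖`, and
since `G` is coercive with constant `1 − δ_{|T|}`, `vᵀ G⁻¹ v ≤ ‖v‖² / (1 − δ_{|T|})`. Hence the
quadratic form of `A_Δᵀ M A_Δ` is coercive with constant `c = 1 − δ_{|Δ|} − θ² / (1 − δ_{|T|})`,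
and any matrix `B` with `c ‖x‖² ≤ xᵀ B x` satisfies `c ‖x‖ ≤ ‖B x‖`: it is invertible and
`‖B⁻¹‖₂ ≤ 1 / c`.
-/

section Euclidean

variable {k : Type*} [Fintype k]

lemma l2v_nonneg (v : k → ℝ) : 0 ≤ l2v v := Real.sqrt_nonneg _

lemma l2v_sq (v : k → ℝ) : l2v v ^ 2 = ∑ i, v i ^ 2 :=
  Real.sq_sqrt (sum_nonneg fun _ _ => sq_nonneg _)

lemma l2v_sq_eq_dotProduct (v : k → ℝ) : l2v v ^ 2 = v ⬝ᵥ v := by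
  rw [l2v_sq]; simp only [dotProduct, sq]

lemma dotProduct_le_l2v_mul_l2v (v w : k → ℝ) : v ⬝ᵥ w ≤ l2v v * l2v w :=
  Real.sum_mul_le_sqrt_mul_sqrt _ v w

lemma l2v_eq_zero_iff {v : k → ℝ} : l2v v = 0 ↔ v = 0 := by
  rw [← sq_eq_zero_iff, l2v_sq_eq_dotProduct, dotProduct_self_eq_zero]

lemma dotProduct_transpose_mul_mulVec_self {l : Type*} [Fintype l] (P : Matrix l k ℝ)
    (x : k → ℝ) : x ⬝ᵥ (Pᵀ * P) *ᵥ x = l2v (P *ᵥ x) ^ 2 := by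
  rw [← mulVec_mulVec, dotProduct_mulVec, vecMul_transpose, l2v_sq_eq_dotProduct]

lemma dotProduct_transpose_mul_mul_mulVec {l : Type*} [Fintype l] (P : Matrix l k ℝ)
    (Q : Matrix l l ℝ) (x : k → ℝ) : x ⬝ᵥ (Pᵀ * Q * P) *ᵥ x = (P *ᵥ x) ⬝ᵥ Q *ᵥ (P *ᵥ x) := by
  rw [← mulVec_mulVec, ← mulVec_mulVec, dotProduct_mulVec, vecMul_transpose]

end Euclidean

section Coercive

variable {k : Type*} [Fintype k] {B : Matrix k k ℝ} {c : ℝ}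

lemma mul_l2v_le_l2v_mulVec {x : k → ℝ} (h : c * l2v x ^ 2 ≤ x ⬝ᵥ B *ᵥ x) :
    c * l2v x ≤ l2v (B *ᵥ x) := by
  rcases (l2v_nonneg x).eq_or_lt with hx | hx
  · rw [← hx, mul_zero]; exact l2v_nonneg _
  · refine le_of_mul_le_mul_right ?_ hx
    calc c * l2v x * l2v x = c * l2v x ^ 2 := by ring
      _ ≤ x ⬝ᵥ B *ᵥ x := h
      _ ≤ l2v x * l2v (B *ᵥ x) := dotProduct_le_l2v_mul_l2v _ _
      _ = l2v (B *ᵥ x) * l2v x := mul_comm _ _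

variable [DecidableEq k] (hc : 0 < c) (hB : ∀ x, c * l2v x ^ 2 ≤ x ⬝ᵥ B *ᵥ x)
include hc hB

lemma isUnit_of_coercive : IsUnit B := by
  refine mulVec_injective_iff_isUnit.mp <| (injective_iff_map_eq_zero' B.mulVecLin).mpr ?_
  intro x
  refine ⟨fun hBx => ?_, fun hx => by simp [hx]⟩
  have := mul_l2v_le_l2v_mulVec (hB x)
  rw [← mulVecLin_apply, hBx, l2v_eq_zero_iff.mpr rfl] at this
  exact l2v_eq_zero_iff.mp <| le_antisymm (nonpos_of_mul_nonpos_right this hc) (l2v_nonneg x)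

lemma mul_l2v_inv_mulVec_le (y : k → ℝ) : c * l2v (B⁻¹ *ᵥ y) ≤ l2v y := by
  have hBB : B * B⁻¹ = 1 :=
    mul_nonsing_inv B ((isUnit_iff_isUnit_det B).mp (isUnit_of_coercive hc hB))
  simpa only [mulVec_mulVec, hBB, one_mulVec] using mul_l2v_le_l2v_mulVec (hB (B⁻¹ *ᵥ y))

lemma dotProduct_inv_mulVec_le (v : k → ℝ) : v ⬝ᵥ B⁻¹ *ᵥ v ≤ l2v v ^ 2 / c := by
  rw [le_div_iff₀ hc]
  calc v ⬝ᵥ B⁻¹ *ᵥ v * c ≤ l2v v * l2v (B⁻¹ *ᵥ v) * c := by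
        gcongr; exact dotProduct_le_l2v_mul_l2v _ _
    _ = l2v v * (c * l2v (B⁻¹ *ᵥ v)) := by ring
    _ ≤ l2v v * l2v v := by gcongr; exacts [l2v_nonneg _, mul_l2v_inv_mulVec_le hc hB v]
    _ = l2v v ^ 2 := (sq _).symm

lemma spec_inv_le_of_coercive : spec B⁻¹ ≤ 1 / c := by
  refine Real.sSup_le ?_ (one_div_pos.mpr hc).le
  rintro _ ⟨y, hy, rfl⟩
  rw [le_div_iff₀' hc]
  exact (mul_l2v_inv_mulVec_le hc hB y).trans hy

end Coercive

section ColumnSubmatrix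

lemma sum_eq_sum_coe_of_eq_zero {ι M : Type*} [Fintype ι] [AddCommMonoid M] {S : Finset ι}
    {f : ι → M} (hf : ∀ j ∉ S, f j = 0) : ∑ j, f j = ∑ j : {j // j ∈ S}, f j :=
  (sum_subset (subset_univ S) fun j _ hj => hf j hj).symm.trans (sum_coe_sort S f).symm

def zeroExt (S : Finset (Fin m)) (x : {j // j ∈ S} → ℝ) : Fin m → ℝ :=
  fun j => if h : j ∈ S then x ⟨j, h⟩ else 0

lemma suppOn_zeroExt (S : Finset (Fin m)) (x : {j // j ∈ S} → ℝ) : suppOn (zeroExt S x) S :=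
  fun _ hj => dif_neg hj

lemma l2v_zeroExt (S : Finset (Fin m)) (x : {j // j ∈ S} → ℝ) : l2v (zeroExt S x) = l2v x := by
  rw [l2v, l2v, sum_eq_sum_coe_of_eq_zero (S := S) fun j hj => by simp [zeroExt, dif_neg hj]]
  simp only [zeroExt, dif_pos (Subtype.prop _)]

lemma mulVec_zeroExt (A : Matrix (Fin n) (Fin m) ℝ) (S : Finset (Fin m))
    (x : {j // j ∈ S} → ℝ) : A *ᵥ zeroExt S x = cols A S *ᵥ x := by
  funext i
  rw [mulVec, dotProduct,
    sum_eq_sum_coe_of_eq_zero (S := S) fun j hj => by simp [zeroExt, dif_neg hj]]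
  simp only [zeroExt, dif_pos (Subtype.prop _), cols, mulVec, dotProduct, of_apply]

variable {A : Matrix (Fin n) (Fin m) ℝ}

lemma RIP.coercive_gram {S : Finset (Fin m)} {δ : ℝ} (h : RIP A S.card δ)
    (x : {j // j ∈ S} → ℝ) :
    (1 - δ) * l2v x ^ 2 ≤ x ⬝ᵥ ((cols A S)ᵀ * cols A S) *ᵥ x := by
  have := (h.2 S le_rfl (zeroExt S x) (suppOn_zeroExt S x)).1
  rwa [← l2v_sq, ← l2v_sq, mulVec_zeroExt, l2v_zeroExt,
    ← dotProduct_transpose_mul_mulVec_self] at this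

lemma ROC.l2v_cross_mulVec_le {T Δ : Finset (Fin m)} {θ : ℝ} (h : ROC A Δ.card T.card θ)
    (hdisj : Disjoint T Δ) (x : {j // j ∈ Δ} → ℝ) :
    l2v (((cols A T)ᵀ * cols A Δ) *ᵥ x) ≤ θ * l2v x := by
  set v := ((cols A T)ᵀ * cols A Δ) *ᵥ x
  have hroc := h.2 Δ T hdisj.symm le_rfl le_rfl (zeroExt Δ x) (zeroExt T v)
    (suppOn_zeroExt Δ x) (suppOn_zeroExt T v)
  rw [mulVec_zeroExt, mulVec_zeroExt, l2v_zeroExt, l2v_zeroExt] at hroc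
  have hvv : l2v v ^ 2 = (cols A Δ *ᵥ x) ⬝ᵥ (cols A T *ᵥ v) := by
    have hv : v = (cols A T)ᵀ *ᵥ (cols A Δ *ᵥ x) := (mulVec_mulVec _ _ _).symm
    rw [l2v_sq_eq_dotProduct]
    nth_rewrite 1 [hv]
    rw [mulVec_transpose, ← dotProduct_mulVec]
  have hθx : 0 ≤ θ * l2v x := mul_nonneg h.1 (l2v_nonneg x)
  nlinarith [le_abs_self ((cols A Δ *ᵥ x) ⬝ᵥ (cols A T *ᵥ v)), l2v_nonneg v]

end ColumnSubmatrix

section Schur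

variable {A : Matrix (Fin n) (Fin m) ℝ} {T Δ : Finset (Fin m)}

lemma dotProduct_schur_mulVec (x : {j // j ∈ Δ} → ℝ) :
    x ⬝ᵥ schur A T Δ *ᵥ x = l2v (cols A Δ *ᵥ x) ^ 2 -
      (((cols A T)ᵀ * cols A Δ) *ᵥ x) ⬝ᵥ ((cols A T)ᵀ * cols A T)⁻¹ *ᵥ
        (((cols A T)ᵀ * cols A Δ) *ᵥ x) := by
  rw [schur, dotProduct_transpose_mul_mul_mulVec, projM, sub_mulVec, one_mulVec, dotProduct_sub,
    ← l2v_sq_eq_dotProduct, ← mulVec_mulVec, ← mulVec_mulVec, ← mulVec_mulVec,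
    dotProduct_mulVec, mulVec_transpose]

lemma schur_coercive {δT δΔ θ : ℝ} (hdisj : Disjoint T Δ) (hδT : RIP A T.card δT)
    (hδΔ : RIP A Δ.card δΔ) (hθ : ROC A Δ.card T.card θ) (hδT1 : δT < 1)
    (x : {j // j ∈ Δ} → ℝ) :
    (1 - δΔ - θ ^ 2 / (1 - δT)) * l2v x ^ 2 ≤ x ⬝ᵥ schur A T Δ *ᵥ x := by
  have hδT0 : 0 < 1 - δT := sub_pos.mpr hδT1
  set v := ((cols A T)ᵀ * cols A Δ) *ᵥ x
  calc (1 - δΔ - θ ^ 2 / (1 - δT)) * l2v x ^ 2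
      = (1 - δΔ) * l2v x ^ 2 - (θ * l2v x) ^ 2 / (1 - δT) := by ring
    _ ≤ l2v (cols A Δ *ᵥ x) ^ 2 - l2v v ^ 2 / (1 - δT) := by
        gcongr
        · rw [← dotProduct_transpose_mul_mulVec_self]; exact hδΔ.coercive_gram x
        · exact l2v_nonneg v
        · exact hθ.l2v_cross_mulVec_le hdisj x
    _ ≤ l2v (cols A Δ *ᵥ x) ^ 2 - v ⬝ᵥ ((cols A T)ᵀ * cols A T)⁻¹ *ᵥ v := by
        gcongr; exact dotProduct_inv_mulVec_le hδT0 hδT.coercive_gram v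
    _ = x ⬝ᵥ schur A T Δ *ᵥ x :=
        (dotProduct_schur_mulVec x).symm

end Schur

/-- RIP bound on the spectral norm of (A_Δᵀ M A_Δ)⁻¹. -/
theorem stmt6 (n m : ℕ) (A : Matrix (Fin n) (Fin m) ℝ) (T Δ : Finset (Fin m))
    (hdisj : Disjoint T Δ) (δT δΔ θ : ℝ)
    (hδT : RIP A T.card δT) (hδΔ : RIP A Δ.card δΔ) (hθ : ROC A Δ.card T.card θ)
    (hδT1 : δT < 1)
    (hpos : 0 < 1 - δΔ - θ ^ 2 / (1 - δT)) :
    IsUnit (schur A T Δ) ∧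
    spec ((schur A T Δ)⁻¹) ≤ 1 / (1 - δΔ - θ ^ 2 / (1 - δT)) := by
  have hcoercive := schur_coercive hdisj hδT hδΔ hθ hδT1
  exact ⟨isUnit_of_coercive hpos hcoercive, spec_inv_le_of_coercive hpos hcoercive⟩
end
end

section
/- Let T, Δ be disjoint index sets, N_e = T∪Δ, A an n×m matrix with A_{N_e} of full column rank, M = I − A_T(A_T'A_T)^{-1}A_T', y ∈ ℝⁿ, γ > 0, c the least-squares solution on N_e, and b̃ the minimizer of L(b) = (1/2)‖y − Ab‖₂² + γ‖b_{T^c}‖₁ over vectors supported on N_e. If ‖A'(y − A_{N_e}c_{N_e})‖_∞ < γ·[1 − max_{ω ∉ N_e} ‖(A_Δ'MA_Δ)^{-1}A_Δ'MA_ω‖₁], then b̃ is the unique global minimizer of L over all of ℝᵐ. -/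
open Matrix Finset

noncomputable section

variable {n m : ℕ}

/-!
`L` is convex: writing `ρ = Aᵀ (y − A b̃)` and `L'(b̃; d)` for its one-sided directional
derivative, `L (b̃ + d) ≥ L b̃ + L'(b̃; d) + ½ ‖A d‖²`. Minimality of `b̃` among vectors supported
on `N = T ∪ Δ` gives `L'(b̃; d) ≥ 0` for such `d`; in particular `ρ` vanishes on `T` and
`|ρ_j| ≤ γ` on `Δ`.

With `r = y − A b̃` and `r_c = y − A_N c_N`, the difference `r − r_c` lies in the column span of
`A_N` and is orthogonal to that of `A_T`, which forces `r = r_c + M A_Δ (A_Δᵀ M A_Δ)⁻¹ A_Δᵀ r`.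
Hence `|ρ_ω| ≤ ‖Aᵀ r_c‖_∞ + γ ‖(A_Δᵀ M A_Δ)⁻¹ A_Δᵀ M A_ω‖₁` for every `ω`, and the hypothesis
makes this `< γ` off `N`. So `L'(b̃; d) > 0` for every nonzero direction `d` supported off `N`,
while for a nonzero `d` supported on `N` the term `½ ‖A d‖²` is positive by full column rank.
-/

open Filter Topology

def absDirDeriv (a x : ℝ) : ℝ := if a = 0 then |x| else Real.sign a * x

lemma absDirDeriv_zero_right (a : ℝ) : absDirDeriv a 0 = 0 := by
  simp [absDirDeriv]

lemma absDirDeriv_le_abs_add_sub_abs (a x : ℝ) : absDirDeriv a x ≤ |a + x| - |a| := by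
  unfold absDirDeriv
  split_ifs with ha
  · simp [ha]
  · rcases lt_or_gt_of_ne ha with h | h
    · rw [Real.sign_of_neg h, abs_of_neg h]; linarith [neg_abs_le (a + x)]
    · rw [Real.sign_of_pos h, abs_of_pos h]; linarith [le_abs_self (a + x)]

lemma absDirDeriv_le_abs (a x : ℝ) : absDirDeriv a x ≤ |x| :=
  (absDirDeriv_le_abs_add_sub_abs a x).trans (by linarith [abs_add_le a x])

lemma eventually_abs_add_mul_sub_abs (a x : ℝ) :
    ∀ᶠ t in 𝓝[>] 0, |a + t * x| - |a| = t * absDirDeriv a x := by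
  unfold absDirDeriv
  split_ifs with ha
  · filter_upwards [self_mem_nhdsWithin] with t (ht : 0 < t)
    rw [ha, zero_add, abs_zero, sub_zero, abs_mul, abs_of_pos ht]
  · have hsmall : ∀ᶠ t in 𝓝[>] (0 : ℝ), |t * x| < |a| := by
      have : Tendsto (fun t : ℝ => |t * x|) (𝓝 0) (𝓝 0) := by
        simpa using ((continuous_id.mul continuous_const).abs.tendsto (0 : ℝ))
      exact (tendsto_nhdsWithin_of_tendsto_nhds this).eventually
        (gt_mem_nhds (abs_pos.mpr ha))
    filter_upwards [hsmall] with t ht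
    rcases lt_or_gt_of_ne ha with h | h
    · rw [abs_of_neg h] at ht
      rw [Real.sign_of_neg h, abs_of_neg h, abs_of_neg (by linarith [le_abs_self (t * x)])]
      ring
    · rw [abs_of_pos h] at ht
      rw [Real.sign_of_pos h, abs_of_pos h, abs_of_pos (by linarith [neg_abs_le (t * x)])]
      ring

section Objective

variable (A : Matrix (Fin n) (Fin m) ℝ) (y : Fin n → ℝ) (γ : ℝ) (T : Finset (Fin m))

def objLDirDeriv (b d : Fin m → ℝ) : ℝ :=
  γ * ∑ j ∈ Tᶜ, absDirDeriv (b j) (d j) - (Aᵀ *ᵥ (y - A *ᵥ b)) ⬝ᵥ d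

lemma objL_add (b d : Fin m → ℝ) :
    objL A y γ T (b + d) = objL A y γ T b - (Aᵀ *ᵥ (y - A *ᵥ b)) ⬝ᵥ d
      + 1 / 2 * ∑ i, (A *ᵥ d) i ^ 2 + γ * ∑ j ∈ Tᶜ, (|b j + d j| - |b j|) := by
  rw [mulVec_transpose, ← dotProduct_mulVec]
  simp only [objL, l1c, mulVec_add, Pi.add_apply, dotProduct, Pi.sub_apply, sum_sub_distrib]
  have hsq : ∀ i, (y i - ((A *ᵥ b) i + (A *ᵥ d) i)) ^ 2
      = (y i - (A *ᵥ b) i) ^ 2 - 2 * ((y i - (A *ᵥ b) i) * (A *ᵥ d) i) + (A *ᵥ d) i ^ 2 :=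
    fun i => by ring
  simp only [hsq, sum_add_distrib, sum_sub_distrib, ← mul_sum]
  ring

lemma objL_add_ge (hγ : 0 ≤ γ) (b d : Fin m → ℝ) :
    objL A y γ T b + objLDirDeriv A y γ T b d + 1 / 2 * ∑ i, (A *ᵥ d) i ^ 2
      ≤ objL A y γ T (b + d) := by
  have hl1 : ∑ j ∈ Tᶜ, absDirDeriv (b j) (d j) ≤ ∑ j ∈ Tᶜ, (|b j + d j| - |b j|) :=
    sum_le_sum fun j _ => absDirDeriv_le_abs_add_sub_abs _ _
  rw [objL_add, objLDirDeriv]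
  linarith [mul_le_mul_of_nonneg_left hl1 hγ]

lemma eventually_objL_add_smul (b d : Fin m → ℝ) :
    ∀ᶠ t in 𝓝[>] 0, objL A y γ T (b + t • d)
      = objL A y γ T b + t * objLDirDeriv A y γ T b d + t ^ 2 / 2 * ∑ i, (A *ᵥ d) i ^ 2 := by
  have hl1 : ∀ᶠ t in 𝓝[>] (0 : ℝ),
      ∀ j, |b j + t * d j| - |b j| = t * absDirDeriv (b j) (d j) :=
    eventually_all.mpr fun j => eventually_abs_add_mul_sub_abs (b j) (d j)
  filter_upwards [hl1] with t ht
  simp only [objL_add, Pi.smul_apply, smul_eq_mul, ht, mulVec_smul, dotProduct_smul,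
    objLDirDeriv, mul_pow, ← mul_sum]
  ring

lemma objLDirDeriv_nonneg_of_isRestrMin {S : Finset (Fin m)} {b d : Fin m → ℝ}
    (hb : IsRestrMin A y γ T S b) (hd : suppOn d S) : 0 ≤ objLDirDeriv A y γ T b d := by
  set Q := ∑ i, (A *ᵥ d) i ^ 2
  have hlim : Tendsto (fun t => objLDirDeriv A y γ T b d + t / 2 * Q) (𝓝[>] 0)
      (𝓝 (objLDirDeriv A y γ T b d)) :=
    tendsto_nhdsWithin_of_tendsto_nhds <|
      (by fun_prop : Continuous fun t : ℝ => objLDirDeriv A y γ T b d + t / 2 * Q).tendsto' 0 _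
        (by simp)
  refine ge_of_tendsto hlim ?_
  filter_upwards [eventually_objL_add_smul A y γ T b d, self_mem_nhdsWithin]
    with t ht (htpos : 0 < t)
  have hsupp : suppOn (b + t • d) S := fun j hj => by simp [hb.1 j hj, hd j hj]
  have hle := hb.2 _ hsupp
  rw [ht] at hle
  exact nonneg_of_mul_nonneg_right (by linarith) htpos

lemma suppOn_single {S : Finset (Fin m)} {j : Fin m} (hj : j ∈ S) (s : ℝ) :
    suppOn (Pi.single j s) S :=
  fun k hk => by simp [show k ≠ j by rintro rfl; exact hk hj]

lemma objLDirDeriv_single (b : Fin m → ℝ) (j : Fin m) (s : ℝ) :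
    objLDirDeriv A y γ T b (Pi.single j s)
      = (if j ∈ T then 0 else γ * absDirDeriv (b j) s) - s * (Aᵀ *ᵥ (y - A *ᵥ b)) j := by
  have hsum : ∑ k ∈ Tᶜ, absDirDeriv (b k) ((Pi.single j s : Fin m → ℝ) k)
      = if j ∈ T then 0 else absDirDeriv (b j) s := by
    simp only [Pi.apply_single (fun k => absDirDeriv (b k)) (fun k => absDirDeriv_zero_right _),
      sum_pi_single', mem_compl]
    split_ifs <;> simp_all
  rw [objLDirDeriv, hsum, dotProduct_single, mul_comm s]
  split_ifs <;> simp

lemma residual_corr_eq_zero_of_isRestrMin {S : Finset (Fin m)} {b : Fin m → ℝ}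
    (hb : IsRestrMin A y γ T S b) {j : Fin m} (hjT : j ∈ T) (hjS : j ∈ S) :
    (Aᵀ *ᵥ (y - A *ᵥ b)) j = 0 := by
  have h1 := objLDirDeriv_nonneg_of_isRestrMin A y γ T hb (suppOn_single hjS 1)
  have h2 := objLDirDeriv_nonneg_of_isRestrMin A y γ T hb (suppOn_single hjS (-1))
  simp only [objLDirDeriv_single, if_pos hjT] at h1 h2
  linarith

lemma abs_residual_corr_le_of_isRestrMin (hγ : 0 ≤ γ) {S : Finset (Fin m)} {b : Fin m → ℝ}
    (hb : IsRestrMin A y γ T S b) {j : Fin m} (hjS : j ∈ S) :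
    |(Aᵀ *ᵥ (y - A *ᵥ b)) j| ≤ γ := by
  have hle : ∀ s : ℝ, 0 ≤ γ * |s| - s * (Aᵀ *ᵥ (y - A *ᵥ b)) j := fun s => by
    have h := objLDirDeriv_nonneg_of_isRestrMin A y γ T hb (suppOn_single hjS s)
    rw [objLDirDeriv_single] at h
    have : (if j ∈ T then 0 else γ * absDirDeriv (b j) s) ≤ γ * |s| := by
      split_ifs
      · positivity
      · exact mul_le_mul_of_nonneg_left (absDirDeriv_le_abs _ _) hγ
    linarith
  have h1 := hle 1
  have h2 := hle (-1)
  norm_num at h1 h2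
  exact abs_le.mpr ⟨by linarith, by linarith⟩

end Objective

lemma abs_le_linfv {κ : Type*} [Fintype κ] (v : κ → ℝ) (i : κ) : |v i| ≤ linfv v :=
  le_ciSup (f := fun i => |v i|) (Set.finite_range _).bddAbove i

lemma abs_dotProduct_le_l1v_mul {κ : Type*} [Fintype κ] (v w : κ → ℝ) {c : ℝ}
    (hw : ∀ i, |w i| ≤ c) : |v ⬝ᵥ w| ≤ l1v v * c := by
  calc |v ⬝ᵥ w| ≤ ∑ i, |v i * w i| := abs_sum_le_sum_abs _ _
    _ ≤ ∑ i, |v i| * c := sum_le_sum fun i _ => by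
        rw [abs_mul]; exact mul_le_mul_of_nonneg_left (hw i) (abs_nonneg _)
    _ = l1v v * c := by rw [l1v, sum_mul]

lemma isUnit_transpose_mul_self_iff {ι κ : Type*} [Fintype ι] [Fintype κ] [DecidableEq κ]
    (B : Matrix ι κ ℝ) : IsUnit (Bᵀ * B) ↔ ∀ x, B *ᵥ x = 0 → x = 0 := by
  rw [← mulVec_injective_iff_isUnit]
  change Function.Injective (Bᵀ * B).mulVecLin ↔ _
  rw [injective_iff_map_eq_zero]
  simp [← conjTranspose_eq_transpose_of_trivial, conjTranspose_mul_self_mulVec_eq_zero]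

def zeroExtend (S : Finset (Fin m)) (z : {j // j ∈ S} → ℝ) : Fin m → ℝ :=
  fun j => if h : j ∈ S then z ⟨j, h⟩ else 0

lemma suppOn_zeroExtend (S : Finset (Fin m)) (z : {j // j ∈ S} → ℝ) :
    suppOn (zeroExtend S z) S :=
  fun _ hj => dif_neg hj

lemma subv_zeroExtend (S : Finset (Fin m)) (z : {j // j ∈ S} → ℝ) :
    subv (zeroExtend S z) S = z := by
  funext j
  simp [subv, zeroExtend, j.2]

lemma zeroExtend_subv {S : Finset (Fin m)} {b : Fin m → ℝ} (hb : suppOn b S) :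
    zeroExtend S (subv b S) = b := by
  funext j
  by_cases hj : j ∈ S
  · simp [zeroExtend, subv, hj]
  · simp [zeroExtend, hj, hb j hj]

lemma zeroExtend_subv_add_zeroExtend_subv {T Δ : Finset (Fin m)} (hdisj : Disjoint T Δ)
    {b : Fin m → ℝ} (hb : suppOn b (T ∪ Δ)) :
    zeroExtend T (subv b T) + zeroExtend Δ (subv b Δ) = b := by
  funext j
  by_cases hjT : j ∈ T
  · simp [zeroExtend, subv, hjT, disjoint_left.mp hdisj hjT]
  · by_cases hjΔ : j ∈ Δ
    · simp [zeroExtend, subv, hjT, hjΔ]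
    · simp [zeroExtend, hjT, hjΔ, hb j (by simp [hjT, hjΔ])]

section Columns

variable (A : Matrix (Fin n) (Fin m) ℝ)

lemma cols_mulVec (S : Finset (Fin m)) (z : {j // j ∈ S} → ℝ) :
    cols A S *ᵥ z = A *ᵥ zeroExtend S z := by
  funext i
  simp only [mulVec, dotProduct, cols, of_apply, zeroExtend, mul_dite, mul_zero]
  rw [← sum_subset (subset_univ S) (fun j _ hj => dif_neg hj), ← sum_attach S]
  exact sum_congr rfl fun j _ => by simp

lemma cols_transpose_mulVec (S : Finset (Fin m)) (v : Fin n → ℝ) :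
    (cols A S)ᵀ *ᵥ v = subv (Aᵀ *ᵥ v) S :=
  rfl

lemma isUnit_gram_cols_iff (S : Finset (Fin m)) :
    IsUnit ((cols A S)ᵀ * cols A S) ↔ ∀ v, suppOn v S → A *ᵥ v = 0 → v = 0 := by
  rw [isUnit_transpose_mul_self_iff]
  refine ⟨fun h v hv hAv => ?_, fun h z hz => ?_⟩
  · rw [← zeroExtend_subv hv, h (subv v S) (by rw [cols_mulVec, zeroExtend_subv hv, hAv])]
    funext j; simp [zeroExtend]
  · have := h (zeroExtend S z) (suppOn_zeroExtend S z) (by rw [← cols_mulVec, hz])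
    rw [← subv_zeroExtend S z, this]
    rfl

end Columns

section Projection

variable (A : Matrix (Fin n) (Fin m) ℝ) (T Δ : Finset (Fin m))

lemma projM_transpose : (projM A T)ᵀ = projM A T := by
  rw [projM, transpose_sub, transpose_one, transpose_mul, transpose_mul, transpose_transpose,
    transpose_nonsing_inv, transpose_mul, transpose_transpose, Matrix.mul_assoc]

lemma schur_transpose : (schur A T Δ)ᵀ = schur A T Δ := by
  rw [schur, transpose_mul, transpose_mul, transpose_transpose, projM_transpose, Matrix.mul_assoc]

lemma projM_mulVec (v : Fin n → ℝ) :
    projM A T *ᵥ v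
      = v - cols A T *ᵥ (((cols A T)ᵀ * cols A T)⁻¹ *ᵥ ((cols A T)ᵀ *ᵥ v)) := by
  simp [projM, sub_mulVec, mulVec_mulVec, Matrix.mul_assoc]

lemma transpose_mulVec_projM_mul_cols_apply (ω : Fin m) (g : {j // j ∈ Δ} → ℝ) :
    (Aᵀ *ᵥ ((projM A T * cols A Δ) *ᵥ ((schur A T Δ)⁻¹ *ᵥ g))) ω
      = ((schur A T Δ)⁻¹ *ᵥ (((cols A Δ)ᵀ * projM A T) *ᵥ fun i => A i ω)) ⬝ᵥ g := by
  have hinv : ((schur A T Δ)⁻¹)ᵀ = (schur A T Δ)⁻¹ := by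
    rw [transpose_nonsing_inv, schur_transpose]
  change (fun i => A i ω) ⬝ᵥ _ = _
  rw [dotProduct_mulVec, dotProduct_mulVec, ← mulVec_transpose, ← mulVec_transpose,
    transpose_mul, projM_transpose, hinv]

variable {A T Δ}

lemma projM_mul_cols (hP : IsUnit ((cols A T)ᵀ * cols A T)) : projM A T * cols A T = 0 := by
  rw [projM, Matrix.sub_mul, Matrix.one_mul, Matrix.mul_assoc, Matrix.mul_assoc,
    nonsing_inv_mul _ ((isUnit_iff_isUnit_det _).mp hP), Matrix.mul_one, sub_self]

lemma projM_mul_self (hP : IsUnit ((cols A T)ᵀ * cols A T)) :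
    projM A T * projM A T = projM A T := by
  nth_rw 2 [projM]
  rw [Matrix.mul_sub, Matrix.mul_one, ← Matrix.mul_assoc, ← Matrix.mul_assoc, projM_mul_cols hP,
    Matrix.zero_mul, Matrix.zero_mul, sub_zero]

lemma schur_eq_gram (hP : IsUnit ((cols A T)ᵀ * cols A T)) :
    schur A T Δ = (projM A T * cols A Δ)ᵀ * (projM A T * cols A Δ) := by
  rw [transpose_mul, projM_transpose, Matrix.mul_assoc, ← Matrix.mul_assoc (projM A T),
    projM_mul_self hP, schur, Matrix.mul_assoc]

lemma cols_mulVec_add_eq_projM_mulVec (hP : IsUnit ((cols A T)ᵀ * cols A T)) {κ : Type*}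
    [Fintype κ] (D : Matrix (Fin n) κ ℝ) (s : {j // j ∈ T} → ℝ) (t : κ → ℝ)
    (h : (cols A T)ᵀ *ᵥ (cols A T *ᵥ s + D *ᵥ t) = 0) :
    cols A T *ᵥ s + D *ᵥ t = (projM A T * D) *ᵥ t := by
  have hs : s = -(((cols A T)ᵀ * cols A T)⁻¹ *ᵥ ((cols A T)ᵀ *ᵥ (D *ᵥ t))) := by
    rw [mulVec_add, mulVec_mulVec, add_eq_zero_iff_eq_neg] at h
    rw [← mulVec_neg, ← h, mulVec_mulVec, nonsing_inv_mul _ ((isUnit_iff_isUnit_det _).mp hP),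
      one_mulVec]
  rw [← mulVec_mulVec, projM_mulVec, hs, mulVec_neg]
  abel

end Projection

lemma cols_transpose_mulVec_lsq_residual {A : Matrix (Fin n) (Fin m) ℝ} {S : Finset (Fin m)}
    (hG : IsUnit ((cols A S)ᵀ * cols A S)) (y : Fin n → ℝ) :
    (cols A S)ᵀ *ᵥ (y - cols A S *ᵥ lsq A S y) = 0 := by
  rw [mulVec_sub, lsq, mulVec_mulVec, mulVec_mulVec,
    mul_nonsing_inv _ ((isUnit_iff_isUnit_det _).mp hG), one_mulVec, sub_self]

section FullRank

variable {A : Matrix (Fin n) (Fin m) ℝ} {T Δ : Finset (Fin m)}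

lemma isUnit_gram_cols_left (hinj : ∀ v, suppOn v (T ∪ Δ) → A *ᵥ v = 0 → v = 0) :
    IsUnit ((cols A T)ᵀ * cols A T) :=
  (isUnit_gram_cols_iff A T).mpr fun v hv =>
    hinj v fun j hj => hv j fun hjT => hj (mem_union_left _ hjT)

lemma isUnit_schur (hinj : ∀ v, suppOn v (T ∪ Δ) → A *ᵥ v = 0 → v = 0)
    (hdisj : Disjoint T Δ) : IsUnit (schur A T Δ) := by
  have hP := isUnit_gram_cols_left hinj
  rw [schur_eq_gram hP, isUnit_transpose_mul_self_iff]
  intro t ht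
  set s := ((cols A T)ᵀ * cols A T)⁻¹ *ᵥ ((cols A T)ᵀ *ᵥ (cols A Δ *ᵥ t))
  rw [← mulVec_mulVec, projM_mulVec] at ht
  have hsupp : suppOn (zeroExtend Δ t - zeroExtend T s) (T ∪ Δ) := fun j hj => by
    simp [suppOn_zeroExtend Δ t j (fun h => hj (mem_union_right _ h)),
      suppOn_zeroExtend T s j (fun h => hj (mem_union_left _ h))]
  have hv := hinj _ hsupp (by rw [mulVec_sub, ← cols_mulVec, ← cols_mulVec]; exact ht)
  funext j
  simpa [zeroExtend, j.2, disjoint_right.mp hdisj j.2] using congrFun hv j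

lemma residual_eq_lsq_residual_add (hinj : ∀ v, suppOn v (T ∪ Δ) → A *ᵥ v = 0 → v = 0)
    (hdisj : Disjoint T Δ) {y : Fin n → ℝ} {b : Fin m → ℝ}
    (hb : suppOn b (T ∪ Δ)) (hT : ∀ j ∈ T, (Aᵀ *ᵥ (y - A *ᵥ b)) j = 0) :
    y - A *ᵥ b = (y - cols A (T ∪ Δ) *ᵥ lsq A (T ∪ Δ) y)
      + (projM A T * cols A Δ) *ᵥ ((schur A T Δ)⁻¹ *ᵥ ((cols A Δ)ᵀ *ᵥ (y - A *ᵥ b))) := by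
  set r := y - A *ᵥ b
  set rc := y - cols A (T ∪ Δ) *ᵥ lsq A (T ∪ Δ) y
  have hrc : ∀ j ∈ T ∪ Δ, (Aᵀ *ᵥ rc) j = 0 := fun j hj =>
    congrFun (cols_transpose_mulVec_lsq_residual ((isUnit_gram_cols_iff A _).mpr hinj) y)
      ⟨j, hj⟩
  set e := zeroExtend (T ∪ Δ) (lsq A (T ∪ Δ) y) - b
  have he : suppOn e (T ∪ Δ) := fun j hj => by simp [e, suppOn_zeroExtend _ _ j hj, hb j hj]
  have hdiff : r - rc = cols A T *ᵥ subv e T + cols A Δ *ᵥ subv e Δ := by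
    rw [cols_mulVec, cols_mulVec, ← mulVec_add, zeroExtend_subv_add_zeroExtend_subv hdisj he,
      mulVec_sub, ← cols_mulVec]
    simp only [r, rc]
    abel
  have hproj : r - rc = (projM A T * cols A Δ) *ᵥ subv e Δ := by
    rw [hdiff]
    refine cols_mulVec_add_eq_projM_mulVec (isUnit_gram_cols_left hinj) _ _ _ ?_
    rw [← hdiff, cols_transpose_mulVec, mulVec_sub]
    funext j
    simp [subv, hT j j.2, hrc j (mem_union_left _ j.2)]
  have ht : (schur A T Δ)⁻¹ *ᵥ ((cols A Δ)ᵀ *ᵥ r) = subv e Δ := by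
    have hDr : (cols A Δ)ᵀ *ᵥ r = (cols A Δ)ᵀ *ᵥ (r - rc) := by
      rw [cols_transpose_mulVec, cols_transpose_mulVec, mulVec_sub Aᵀ r rc]
      funext j
      simp only [subv, Pi.sub_apply, hrc j (mem_union_right _ j.2), sub_zero]
    rw [hDr, hproj, mulVec_mulVec _ (cols A Δ)ᵀ, ← Matrix.mul_assoc, ← schur, mulVec_mulVec,
      nonsing_inv_mul _ ((isUnit_iff_isUnit_det _).mp (isUnit_schur hinj hdisj)), one_mulVec]
  rw [ht, ← hproj]
  abel

lemma abs_residual_corr_le (hinj : ∀ v, suppOn v (T ∪ Δ) → A *ᵥ v = 0 → v = 0)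
    (hdisj : Disjoint T Δ) {y : Fin n → ℝ} {γ : ℝ} (hγ : 0 ≤ γ)
    {b : Fin m → ℝ} (hb : IsRestrMin A y γ T (T ∪ Δ) b) (ω : Fin m) :
    |(Aᵀ *ᵥ (y - A *ᵥ b)) ω|
      ≤ linfv (Aᵀ *ᵥ (y - cols A (T ∪ Δ) *ᵥ lsq A (T ∪ Δ) y)) + γ * erc A T Δ ω := by
  have hT : ∀ j ∈ T, (Aᵀ *ᵥ (y - A *ᵥ b)) j = 0 := fun j hj =>
    residual_corr_eq_zero_of_isRestrMin A y γ T hb hj (mem_union_left _ hj)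
  rw [residual_eq_lsq_residual_add hinj hdisj hb.1 hT, mulVec_add, Pi.add_apply,
    transpose_mulVec_projM_mul_cols_apply, mul_comm γ]
  exact (abs_add_le _ _).trans (add_le_add (abs_le_linfv _ _) (abs_dotProduct_le_l1v_mul _ _
    fun j => abs_residual_corr_le_of_isRestrMin A y γ T hγ hb (mem_union_right _ j.2)))

end FullRank

section Uniqueness

variable (A : Matrix (Fin n) (Fin m) ℝ) (y : Fin n → ℝ) (γ : ℝ) (T : Finset (Fin m))

lemma objLDirDeriv_add_of_disjoint (b : Fin m → ℝ) {u v : Fin m → ℝ}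
    (huv : ∀ j, u j = 0 ∨ v j = 0) :
    objLDirDeriv A y γ T b (u + v) = objLDirDeriv A y γ T b u + objLDirDeriv A y γ T b v := by
  have h : ∀ j, absDirDeriv (b j) (u j + v j)
      = absDirDeriv (b j) (u j) + absDirDeriv (b j) (v j) := fun j => by
    rcases huv j with h | h <;> simp [h, absDirDeriv_zero_right]
  simp only [objLDirDeriv, Pi.add_apply, h, sum_add_distrib, dotProduct_add]
  ring

lemma objLDirDeriv_pos (b v : Fin m → ℝ)
    (hv : ∀ j, v j ≠ 0 → j ∉ T ∧ b j = 0 ∧ |(Aᵀ *ᵥ (y - A *ᵥ b)) j| < γ) (hv0 : v ≠ 0) :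
    0 < objLDirDeriv A y γ T b v := by
  have habs : ∑ j ∈ Tᶜ, absDirDeriv (b j) (v j) = ∑ j, |v j| := by
    rw [← sum_subset (subset_univ Tᶜ) fun j _ hj => ?_]
    · refine sum_congr rfl fun j _ => ?_
      by_cases h : v j = 0
      · simp [h, absDirDeriv_zero_right]
      · simp [absDirDeriv, (hv j h).2.1]
    · by_contra h
      exact (hv j (abs_ne_zero.mp h)).1 (by simpa using hj)
  have hterm : ∀ j, v j ≠ 0 → 0 < γ * |v j| - (Aᵀ *ᵥ (y - A *ᵥ b)) j * v j := fun j h => by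
    have hρ := (hv j h).2.2
    calc 0 < (γ - |(Aᵀ *ᵥ (y - A *ᵥ b)) j|) * |v j| :=
          mul_pos (by linarith) (abs_pos.mpr h)
      _ ≤ _ := by
          rw [sub_mul, ← abs_mul]
          linarith [le_abs_self ((Aᵀ *ᵥ (y - A *ᵥ b)) j * v j)]
  rw [objLDirDeriv, habs, mul_sum, dotProduct, ← sum_sub_distrib]
  obtain ⟨j₀, hj₀⟩ := Function.ne_iff.mp hv0
  refine sum_pos' (fun j _ => ?_) ⟨j₀, mem_univ _, hterm j₀ hj₀⟩
  by_cases h : v j = 0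
  · simp [h]
  · exact (hterm j h).le

lemma objL_lt_of_isRestrMin (hγ : 0 ≤ γ) {N : Finset (Fin m)} (hTN : T ⊆ N)
    {b : Fin m → ℝ} (hb : IsRestrMin A y γ T N b)
    (hinj : ∀ v, suppOn v N → A *ᵥ v = 0 → v = 0)
    (hout : ∀ j ∉ N, |(Aᵀ *ᵥ (y - A *ᵥ b)) j| < γ) {b' : Fin m → ℝ} (hb' : b' ≠ b) :
    objL A y γ T b < objL A y γ T b' := by
  set d := b' - b
  set dN := (N : Set (Fin m)).indicator d
  set dO := (N : Set (Fin m))ᶜ.indicator d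
  have hdN : suppOn dN N := fun j hj => Set.indicator_of_notMem (by simpa using hj) _
  have hsplit : objLDirDeriv A y γ T b d
      = objLDirDeriv A y γ T b dN + objLDirDeriv A y γ T b dO := by
    rw [← objLDirDeriv_add_of_disjoint, Set.indicator_self_add_compl]
    intro j
    by_cases hj : j ∈ N <;> simp [dN, dO, hj]
  have hge := objL_add_ge A y γ T hγ b d
  rw [add_sub_cancel] at hge
  have hDN := objLDirDeriv_nonneg_of_isRestrMin A y γ T hb hdN
  have hQ : 0 ≤ ∑ i, (A *ᵥ d) i ^ 2 := sum_nonneg fun _ _ => sq_nonneg _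
  by_cases hO : dO = 0
  · have hdsupp : suppOn d N := fun j hj => by
      simpa [dO, hj] using congrFun hO j
    have hAd : A *ᵥ d ≠ 0 := fun h => hb' (sub_eq_zero.mp (hinj d hdsupp h))
    have hQpos : 0 < ∑ i, (A *ᵥ d) i ^ 2 := by
      obtain ⟨i, hi⟩ := Function.ne_iff.mp hAd
      exact sum_pos' (fun _ _ => sq_nonneg _) ⟨i, mem_univ _, sq_pos_iff.mpr hi⟩
    have hDO : objLDirDeriv A y γ T b dO = 0 := by
      simp [hO, objLDirDeriv, absDirDeriv_zero_right]
    linarith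
  · have hOsupp : ∀ j, dO j ≠ 0 → j ∉ T ∧ b j = 0 ∧ |(Aᵀ *ᵥ (y - A *ᵥ b)) j| < γ := fun j hj => by
      have hjN : j ∉ N := fun h => hj (by simp [dO, h])
      exact ⟨fun h => hjN (hTN h), hb.1 j hjN, hout j hjN⟩
    linarith [objLDirDeriv_pos A y γ T b dO hOsupp hO]

end Uniqueness

/-- sufficient condition for the restricted minimizer to be the
unique global minimizer. -/
theorem stmt9 (n m : ℕ) (A : Matrix (Fin n) (Fin m) ℝ) (T Δ : Finset (Fin m))
    (hdisj : Disjoint T Δ)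
    (hrank : IsUnit ((cols A (T ∪ Δ))ᵀ * cols A (T ∪ Δ)))
    (γ : ℝ) (hγ : 0 < γ) (y : Fin n → ℝ) (btil : Fin m → ℝ)
    (hmin : IsRestrMin A y γ T (T ∪ Δ) btil)
    (hcond : ∀ ω, ω ∉ T ∪ Δ →
      linfv (Aᵀ.mulVec (y - (cols A (T ∪ Δ)).mulVec (lsq A (T ∪ Δ) y))) <
        γ * (1 - erc A T Δ ω)) :
    ∀ b : Fin m → ℝ, b ≠ btil → objL A y γ T btil < objL A y γ T b := by
  have hinj := (isUnit_gram_cols_iff A (T ∪ Δ)).mp hrank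
  intro b hb
  refine objL_lt_of_isRestrMin A y γ T hγ.le subset_union_left hmin hinj (fun ω hω => ?_) hb
  linarith [abs_residual_corr_le hinj hdisj hγ.le hmin ω, hcond ω hω]
end
end
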